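/- Ladyzhenskaya's inequality in two dimensions: there is a constant c > 0 such that for every function u in H¹₀ of a bounded domain O ⊂ ℝ², the L⁴ norm of u satisfies ‖u‖_{L⁴}² ≤ c ‖u‖_{L²} ‖∇u‖_{L²}. -/

import Mathlib

/-!
Apply the Gagliardo–Nirenberg–Sobolev inequality `‖v‖_{L^{n/(n-1)}} ≤ C ‖Dv‖_{L¹}` to `v = u²`.
Since `D(u²) = 2u Du`, Hölder's inequality gives `‖D(u²)‖_{L¹} ≤ 2 ‖u‖_{L²} ‖Du‖_{L²}`, while
`‖u²‖_{L^{n/(n-1)}} = ‖u‖²_{L^{2n/(n-1)}}`; for `n = 2` the exponent `2n/(n-1)` is `4`.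
-/

open MeasureTheory Module Function
open scoped NNReal ENNReal

theorem fderiv_sq_eq_smul {𝕜 E : Type*} [NontriviallyNormedField 𝕜] [NormedAddCommGroup E]
    [NormedSpace 𝕜 E] {u : E → 𝕜} {x : E} (hu : DifferentiableAt 𝕜 u x) :
    fderiv 𝕜 (fun y => u y ^ 2) x = (2 * u x) • fderiv 𝕜 u x := by
  rw [fderiv_fun_pow 2 hu]
  simp

section LpNorm

variable {α : Type*} [MeasurableSpace α] {μ : Measure α}

theorem eLpNorm_sq {𝕜 : Type*} [NormedField 𝕜] (u : α → 𝕜) (p : ℝ≥0∞) :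
    eLpNorm (fun x => u x ^ 2) p μ = eLpNorm u (2 * p) μ ^ 2 := by
  have h := eLpNorm_norm_rpow (μ := μ) (p := p) u two_pos
  simp only [Real.rpow_two, ENNReal.ofReal_ofNat, ENNReal.rpow_two] at h
  rw [mul_comm, ← h]
  exact eLpNorm_congr_norm_ae (.of_forall fun x => by simp)

theorem setIntegral_norm_rpow_rpow_eq {F : Type*} [NormedAddCommGroup F] {f : α → F} {s : Set α}
    (hs : support f ⊆ s) {p : ℝ} (hp : 0 < p) (hf : MemLp f (ENNReal.ofReal p) μ) (r : ℝ) :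
    (∫ x in s, ‖f x‖ ^ p ∂μ) ^ r = (eLpNorm f (ENNReal.ofReal p) μ).toReal ^ (p * r) := by
  have hp0 : ENNReal.ofReal p ≠ 0 := by simpa using hp
  rw [← eLpNorm_restrict_eq_of_support_subset hs,
    (hf.restrict s).eLpNorm_eq_integral_rpow_norm hp0 ENNReal.ofReal_ne_top,
    ENNReal.toReal_ofReal hp.le, ENNReal.toReal_ofReal (by positivity),
    ← Real.rpow_mul (by positivity), inv_mul_cancel_left₀ hp.ne']

end LpNorm

section Ladyzhenskaya

variable {E : Type*} [NormedAddCommGroup E] [NormedSpace ℝ E] [MeasurableSpace E] [BorelSpace E]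
  [FiniteDimensional ℝ E]

theorem eLpNorm_fderiv_sq_le {μ : Measure E} {u : E → ℝ} (hu : ContDiff ℝ 1 u) :
    eLpNorm (fderiv ℝ fun x => u x ^ 2) 1 μ ≤ 2 * eLpNorm u 2 μ * eLpNorm (fderiv ℝ u) 2 μ := by
  have hderiv : (fderiv ℝ fun x => u x ^ 2) = ((2 : ℝ) • u) • fderiv ℝ u :=
    funext fun x => fderiv_sq_eq_smul (hu.differentiable one_ne_zero x)
  calc eLpNorm (fderiv ℝ fun x => u x ^ 2) 1 μ
      ≤ eLpNorm ((2 : ℝ) • u) 2 μ * eLpNorm (fderiv ℝ u) 2 μ := hderiv ▸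
      eLpNorm_smul_le_mul_eLpNorm (hu.continuous_fderiv one_ne_zero).aestronglyMeasurable
        (hu.continuous.aestronglyMeasurable.const_smul _)
    _ = 2 * eLpNorm u 2 μ * eLpNorm (fderiv ℝ u) 2 μ := by
      rw [eLpNorm_const_smul, ← Nat.cast_ofNat, Real.enorm_natCast, Nat.cast_ofNat]

variable (μ : Measure E) [μ.IsAddHaarMeasure]

theorem sq_eLpNorm_le_eLpNorm_mul_eLpNorm_fderiv {u : E → ℝ} (hu : ContDiff ℝ 1 u)
    (h2u : HasCompactSupport u) {p : ℝ≥0} (hp : NNReal.HolderConjugate (finrank ℝ E) p) :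
    eLpNorm u (2 * p) μ ^ 2 ≤
      2 * eLpNormLESNormFDerivOneConst μ p * eLpNorm u 2 μ * eLpNorm (fderiv ℝ u) 2 μ := by
  calc eLpNorm u (2 * p) μ ^ 2 = eLpNorm (fun x => u x ^ 2) p μ := (eLpNorm_sq u _).symm
    _ ≤ eLpNormLESNormFDerivOneConst μ p * eLpNorm (fderiv ℝ fun x => u x ^ 2) 1 μ :=
      eLpNorm_le_eLpNorm_fderiv_one μ (hu.pow 2) (h2u.comp_left (zero_pow two_ne_zero)) hp
    _ ≤ eLpNormLESNormFDerivOneConst μ p * (2 * eLpNorm u 2 μ * eLpNorm (fderiv ℝ u) 2 μ) := by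
      gcongr
      exact eLpNorm_fderiv_sq_le hu
    _ = _ := by ring

theorem sq_toReal_eLpNorm_le_eLpNorm_mul_eLpNorm_fderiv {u : E → ℝ} (hu : ContDiff ℝ 1 u)
    (h2u : HasCompactSupport u) {p : ℝ≥0} (hp : NNReal.HolderConjugate (finrank ℝ E) p) :
    (eLpNorm u (2 * p) μ).toReal ^ 2 ≤ 2 * eLpNormLESNormFDerivOneConst μ p *
      (eLpNorm u 2 μ).toReal * (eLpNorm (fderiv ℝ u) 2 μ).toReal := by
  have hu2 := (hu.continuous.memLp_of_hasCompactSupport (μ := μ) (p := 2) h2u).eLpNorm_ne_top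
  have hDu := ((hu.continuous_fderiv one_ne_zero).memLp_of_hasCompactSupport (μ := μ) (p := 2)
    (h2u.fderiv ℝ)).eLpNorm_ne_top
  simpa [ENNReal.toReal_mul] using
    ENNReal.toReal_mono (by finiteness) (sq_eLpNorm_le_eLpNorm_mul_eLpNorm_fderiv μ hu h2u hp)

end Ladyzhenskaya

theorem ladyzhenskaya_2d_general (O : Set (EuclideanSpace ℝ (Fin 2))) :
    ∃ c > 0, ∀ u : EuclideanSpace ℝ (Fin 2) → ℝ,
      ContDiff ℝ 1 u → HasCompactSupport u → tsupport u ⊆ O →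
      (∫ x in O, |u x| ^ (4 : ℝ)) ^ ((1 : ℝ) / 2) ≤
        c * (∫ x in O, |u x| ^ (2 : ℝ)) ^ ((1 : ℝ) / 2) *
          (∫ x in O, ‖fderiv ℝ u x‖ ^ (2 : ℝ)) ^ ((1 : ℝ) / 2) := by
  have hp : NNReal.HolderConjugate (finrank ℝ (EuclideanSpace ℝ (Fin 2))) 2 := by
    simpa using NNReal.HolderConjugate.two_two
  set K : ℝ := 2 * eLpNormLESNormFDerivOneConst (volume : Measure (EuclideanSpace ℝ (Fin 2))) 2
  refine ⟨K + 1, by positivity, fun u hu h2u hO => ?_⟩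
  have hmem : ∀ q, MemLp u q volume := fun q => hu.continuous.memLp_of_hasCompactSupport h2u
  have hDmem : MemLp (fderiv ℝ u) 2 volume :=
    (hu.continuous_fderiv one_ne_zero).memLp_of_hasCompactSupport (h2u.fderiv ℝ)
  simp only [← Real.norm_eq_abs]
  rw [setIntegral_norm_rpow_rpow_eq ((subset_tsupport u).trans hO) (by norm_num) (hmem _),
    setIntegral_norm_rpow_rpow_eq ((subset_tsupport u).trans hO) (by norm_num) (hmem _),
    setIntegral_norm_rpow_rpow_eq ((support_fderiv_subset ℝ).trans hO) (by norm_num)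
      (by simpa using hDmem)]
  have key := sq_toReal_eLpNorm_le_eLpNorm_mul_eLpNorm_fderiv volume hu h2u hp
  norm_num at key ⊢
  exact key.trans (by gcongr; linarith)

/-- Ladyzhenskaya's inequality in 2D: `‖u‖_{L⁴}² ≤ c ‖u‖_{L²} ‖∇u‖_{L²}` for
`u ∈ H¹₀(O)`, formalized on the dense subclass of compactly supported `C¹`
functions with support in `O`. -/
theorem ladyzhenskaya_2d (O : Set (EuclideanSpace ℝ (Fin 2))) (hO : IsOpen O)
    (hObdd : Bornology.IsBounded O) :
    ∃ c > 0, ∀ u : EuclideanSpace ℝ (Fin 2) → ℝ,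
      ContDiff ℝ 1 u → HasCompactSupport u → tsupport u ⊆ O →
      (∫ x in O, |u x| ^ (4 : ℝ)) ^ ((1 : ℝ) / 2) ≤
        c * (∫ x in O, |u x| ^ (2 : ℝ)) ^ ((1 : ℝ) / 2) *
          (∫ x in O, ‖fderiv ℝ u x‖ ^ (2 : ℝ)) ^ ((1 : ℝ) / 2) :=
  ladyzhenskaya_2d_general O
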